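/- Let α ≥ 1, 0 < β < 1, and M > 0 be real numbers. For all real x > 0 and y > 0, the inequality β·y / (α·x + y)² > M holds if and only if 0 < x < β/(4αM) and γ₁ − γ₂ < y < γ₁ + γ₂, where γ₁ = (β − 2αMx)/(2M) and γ₂ = √( β(β − 4αMx) ) / (2M). -/

import Mathlib

/-!
Clearing the positive denominator `(αx + y)²` turns `βy/(αx + y)² > M` into the quadratic
inequality `M y² − (β − 2αMx) y + M(αx)² < 0` in `y`. Its discriminant is `β(β − 4αMx)`, so
it holds exactly when the discriminant is positive, i.e. `x < β/(4αM)`, and `y` lies strictly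
between the two roots `γ₁ ± γ₂`.
-/

theorem quadratic_neg_iff {a b c : ℝ} (ha : 0 < a) (y : ℝ) :
    a * (y * y) + b * y + c < 0 ↔
      0 < discrim a b c ∧
        (-b - √(discrim a b c)) / (2 * a) < y ∧ y < (-b + √(discrim a b c)) / (2 * a) := by
  have h2a : 0 < 2 * a := by positivity
  have hsq : a * (y * y) + b * y + c < 0 ↔ (2 * a * y + b) ^ 2 < discrim a b c := by
    have key : 4 * a * (a * (y * y) + b * y + c) = (2 * a * y + b) ^ 2 - discrim a b c := by
      rw [discrim]; ring
    constructor <;> intro h <;> nlinarith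
  rw [hsq, Real.sq_lt, div_lt_iff₀ h2a, lt_div_iff₀ h2a]
  constructor
  · rintro ⟨hlo, hhi⟩
    have hpos : 0 < √(discrim a b c) := by linarith
    exact ⟨Real.sqrt_pos.1 hpos, by linarith, by linarith⟩
  · rintro ⟨-, hlo, hhi⟩
    constructor <;> linarith

theorem lt_div_sq_iff_quadratic_neg {α β M x y : ℝ} (hs : 0 < α * x + y) :
    M < β * y / (α * x + y) ^ 2 ↔
      M * (y * y) + -(β - 2 * α * M * x) * y + M * (α * x) ^ 2 < 0 := by
  rw [lt_div_iff₀ (pow_pos hs 2)]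
  constructor <;> intro h <;> linarith

theorem discrim_sensitivity (α β M x : ℝ) :
    discrim M (-(β - 2 * α * M * x)) (M * (α * x) ^ 2) = β * (β - 4 * α * M * x) := by
  rw [discrim]; ring

theorem stmt_12 (α β M : ℝ) (hα : 1 ≤ α) (hβ0 : 0 < β) (hM : 0 < M) :
    ∀ x > (0 : ℝ), ∀ y > (0 : ℝ),
      (β * y / (α * x + y) ^ 2 > M ↔
        (0 < x ∧ x < β / (4 * α * M) ∧
          (β - 2 * α * M * x) / (2 * M) - Real.sqrt (β * (β - 4 * α * M * x)) / (2 * M) < y ∧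
          y < (β - 2 * α * M * x) / (2 * M) + Real.sqrt (β * (β - 4 * α * M * x)) / (2 * M))) := by
  intro x hx y hy
  have hα0 : 0 < α := by linarith
  have hdiscrim : 0 < β * (β - 4 * α * M * x) ↔ x < β / (4 * α * M) := by
    rw [mul_pos_iff_of_pos_left hβ0, sub_pos, lt_div_iff₀ (by positivity), mul_comm]
  rw [gt_iff_lt, lt_div_sq_iff_quadratic_neg (by positivity), quadratic_neg_iff hM,
    discrim_sensitivity, hdiscrim, neg_neg, sub_div, add_div]
  exact ⟨fun h => ⟨hx, h⟩, fun h => h.2⟩
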